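/- On the equilateral-triangle grid, if a configuration C contains three mutually adjacent coins (a triangle), then span(C) is the entire (infinite) vertex set of the grid. -/

import Mathlib

/-- The span of a set of positions: the least superset closed under adding any
vertex adjacent to at least 2 vertices of the set. -/
def Span {P : Type*} (G : SimpleGraph P) (C : Set P) : Set P :=
  ⋂₀ {S : Set P | C ⊆ S ∧ ∀ p, (∃ a ∈ S, ∃ b ∈ S, a ≠ b ∧ G.Adj p a ∧ G.Adj p b) → p ∈ S}


/-- The triangular grid on ℤ²: `(x,y)` is adjacent to `(x±1,y)`, `(x,y±1)`,
`(x+1,y−1)`, `(x−1,y+1)`; equivalently `a² + ab + b² = 1` for the difference `(a,b)`. -/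
def TriGrid : SimpleGraph (ℤ × ℤ) where
  Adj p q := (p.1 - q.1)^2 + (p.1 - q.1) * (p.2 - q.2) + (p.2 - q.2)^2 = 1
  symm := ⟨by intro p q h; linear_combination h⟩
  loopless := ⟨by intro p; simp⟩

/-!
Two adjacent coins `p, q` already span the grid. The vertex `p + ρ(q - p)`, with `ρ` the rotation
by 60°, is adjacent to both, so rotating the edge `pq` about `p` brings all six neighbours of `p`
into the span. Each such neighbour again lies in the span together with an adjacent vertex, so
"`p` and all its neighbours are in the span" propagates along edges over the connected grid.
-/

open SimpleGraph

section Span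

variable {P : Type*} {G : SimpleGraph P} {C : Set P}

lemma subset_span : C ⊆ Span G C := fun _ hp _ hS => hS.1 hp

lemma mem_span_of_adj_of_adj {p a b : P} (ha : a ∈ Span G C) (hb : b ∈ Span G C) (hab : a ≠ b)
    (hpa : G.Adj p a) (hpb : G.Adj p b) : p ∈ Span G C :=
  fun S hS => hS.2 p ⟨a, ha S hS, b, hb S hS, hab, hpa, hpb⟩

end Span

lemma SimpleGraph.Preconnected.forall_of_adj {V : Type*} {G : SimpleGraph V} (hG : G.Preconnected)
    {P : V → Prop} (hP : ∀ u v, G.Adj u v → P u → P v) {u : V} (hu : P u) (v : V) : P v := by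
  have h := (reachable_iff_reflTransGen u v).mp (hG u v)
  induction h with
  | refl => exact hu
  | tail _ hadj ih => exact hP _ _ hadj ih

namespace TriGrid

def IsStep (u : ℤ × ℤ) : Prop := u.1 ^ 2 + u.1 * u.2 + u.2 ^ 2 = 1

/-- Rotation by 60° in the lattice basis `(1,0)`, `(0,1)`. -/
def rot (u : ℤ × ℤ) : ℤ × ℤ := (-u.2, u.1 + u.2)

lemma adj_add_iff {p u : ℤ × ℤ} : TriGrid.Adj (p + u) p ↔ IsStep u := by
  simp only [TriGrid, IsStep, Prod.fst_add, Prod.snd_add, add_sub_cancel_left]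

lemma adj_iff_isStep_sub {p q : ℤ × ℤ} : TriGrid.Adj q p ↔ IsStep (q - p) := by
  simpa using adj_add_iff (p := p) (u := q - p)

lemma IsStep.ne_zero {u : ℤ × ℤ} (hu : IsStep u) : u ≠ 0 := by
  rintro rfl; simp [IsStep] at hu

lemma isStep_rot {u : ℤ × ℤ} : IsStep (rot u) ↔ IsStep u := by
  simp only [IsStep, rot]; ring_nf

lemma isStep_rot_sub {u : ℤ × ℤ} : IsStep (rot u - u) ↔ IsStep u := by
  simp only [IsStep, rot, Prod.fst_sub, Prod.snd_sub]; ring_nf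

lemma IsStep.rot_iterate {u : ℤ × ℤ} (hu : IsStep u) (k : ℕ) : IsStep (rot^[k] u) := by
  induction k with
  | zero => exact hu
  | succ k ih => rw [Function.iterate_succ_apply']; exact isStep_rot.mpr ih

lemma rot_iterate_six : rot^[6] = id := by
  funext u; simp [rot]

lemma IsStep.exists_eq_rot_iterate {u : ℤ × ℤ} (hu : IsStep u) : ∃ k, u = rot^[k] (1, 0) := by
  obtain ⟨a, b⟩ := u
  unfold IsStep at hu
  obtain ⟨ha₁, ha₂⟩ : -1 ≤ a ∧ a ≤ 1 := by constructor <;> nlinarith [sq_nonneg (a + 2 * b)]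
  obtain ⟨hb₁, hb₂⟩ : -1 ≤ b ∧ b ≤ 1 := by constructor <;> nlinarith [sq_nonneg (2 * a + b)]
  interval_cases a <;> interval_cases b <;> norm_num at hu
  exacts [⟨3, rfl⟩, ⟨2, rfl⟩, ⟨4, rfl⟩, ⟨1, rfl⟩, ⟨5, rfl⟩, ⟨0, rfl⟩]

lemma exists_rot_iterate_eq {u v : ℤ × ℤ} (hu : IsStep u) (hv : IsStep v) :
    ∃ k, rot^[k] u = v := by
  obtain ⟨i, rfl⟩ := hu.exists_eq_rot_iterate
  obtain ⟨j, rfl⟩ := hv.exists_eq_rot_iterate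
  refine ⟨j + 5 * i, ?_⟩
  rw [← Function.iterate_add_apply, add_assoc, show 5 * i + i = 6 * i by ring,
    Function.iterate_add_apply, Function.iterate_mul, rot_iterate_six, Function.iterate_id, id]

lemma hasse_boxProd_hasse_le : boxProd (hasse ℤ) (hasse ℤ) ≤ TriGrid := by
  rintro ⟨x, y⟩ ⟨x', y'⟩ h
  simp only [boxProd_adj, hasse_adj, Order.covBy_iff_add_one_eq] at h
  show (x - x') ^ 2 + (x - x') * (y - y') + (y - y') ^ 2 = 1
  rcases h with ⟨h | h, rfl⟩ | ⟨h | h, rfl⟩ <;> subst h <;> ring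

lemma preconnected : TriGrid.Preconnected :=
  ((hasse_preconnected_of_succ ℤ).boxProd (hasse_preconnected_of_succ ℤ)).mono hasse_boxProd_hasse_le

variable {C : Set (ℤ × ℤ)}

lemma add_rot_mem_span {p u : ℤ × ℤ} (hu : IsStep u) (hp : p ∈ Span TriGrid C)
    (hpu : p + u ∈ Span TriGrid C) : p + rot u ∈ Span TriGrid C := by
  refine mem_span_of_adj_of_adj hp hpu (by simpa using hu.ne_zero)
    (adj_add_iff.mpr (isStep_rot.mpr hu)) (adj_iff_isStep_sub.mpr ?_)
  simpa [add_sub_add_left_eq_sub] using isStep_rot_sub.mpr hu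

lemma add_rot_iterate_mem_span {p u : ℤ × ℤ} (hu : IsStep u) (hp : p ∈ Span TriGrid C)
    (hpu : p + u ∈ Span TriGrid C) (k : ℕ) : p + rot^[k] u ∈ Span TriGrid C := by
  induction k with
  | zero => exact hpu
  | succ k ih =>
    rw [Function.iterate_succ_apply']
    exact add_rot_mem_span (hu.rot_iterate k) hp ih

lemma mem_span_of_adj_of_edge {p q r : ℤ × ℤ} (hqp : TriGrid.Adj q p)
    (hp : p ∈ Span TriGrid C) (hq : q ∈ Span TriGrid C) (hrp : TriGrid.Adj r p) :
    r ∈ Span TriGrid C := by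
  have hstep := adj_iff_isStep_sub.mp hqp
  obtain ⟨k, hk⟩ := exists_rot_iterate_eq hstep (adj_iff_isStep_sub.mp hrp)
  simpa [hk] using add_rot_iterate_mem_span hstep hp (by simpa using hq) k

end TriGrid

theorem tri_span_univ_general (C : Finset (ℤ × ℤ)) (a b : ℤ × ℤ)
    (ha : a ∈ C) (hb : b ∈ C)
    (hab : TriGrid.Adj a b) :
    Span TriGrid ↑C = Set.univ := by
  let Full (p : ℤ × ℤ) : Prop := p ∈ Span TriGrid ↑C ∧ ∀ q, TriGrid.Adj q p → q ∈ Span TriGrid ↑C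
  have full_of_adj (p q : ℤ × ℤ) (hpq : TriGrid.Adj p q) (hp : Full p) : Full q :=
    ⟨hp.2 q hpq.symm, fun _ => TriGrid.mem_span_of_adj_of_edge hpq (hp.2 q hpq.symm) hp.1⟩
  have full_a : Full a := ⟨subset_span ha, fun _ =>
    TriGrid.mem_span_of_adj_of_edge hab.symm (subset_span ha) (subset_span hb)⟩
  exact Set.eq_univ_of_forall fun p => (TriGrid.preconnected.forall_of_adj full_of_adj full_a p).1

/-- On the triangular grid, a configuration containing a triangle (three mutually
adjacent coins) has span equal to the entire grid. -/
theorem tri_span_univ (C : Finset (ℤ × ℤ)) (a b c : ℤ × ℤ)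
    (ha : a ∈ C) (hb : b ∈ C) (hc : c ∈ C)
    (hab : TriGrid.Adj a b) (hbc : TriGrid.Adj b c) (hac : TriGrid.Adj a c) :
    Span TriGrid ↑C = Set.univ :=
  tri_span_univ_general C a b ha hb hab
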